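/- arXiv:2205.14565 — 2 statements merged into one kernel-verified Lean document; each statement's English description precedes it below -/
import Mathlib

section
/- Composition of equivalence classes of complementary morphisms in a monoidal category is associative and unital up to equivalence; hence the objects of C together with equivalence classes of complementary morphisms form a category Pr(C), the projection category. -/
open CategoryTheory MonoidalCategory

universe v u

variable {C : Type u} [Category.{v} C] [MonoidalCategory C]

structure CompMor (C1 C2 : C) : Type max u v where
  D : C
  f : C1 ⊗ D ⟶ C2

def ElemEquiv {C1 C2 : C} (φ φ' : CompMor C1 C2) : Prop :=
  ∃ g : φ.D ⟶ φ'.D, (C1 ◁ g) ≫ φ'.f = φ.f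

def CompEquiv {C1 C2 : C} (φ φ' : CompMor C1 C2) : Prop :=
  Relation.EqvGen ElemEquiv φ φ'

def CompMor.comp {C1 C2 C3 : C} (φ : CompMor C1 C2) (ψ : CompMor C2 C3) :
    CompMor C1 C3 where
  D := φ.D ⊗ ψ.D
  f := (α_ C1 φ.D ψ.D).inv ≫ (φ.f ▷ ψ.D) ≫ ψ.f

/-- The compositional unit at `X` is the unitor `X ⊗ 𝟙 ≅ X`. -/
def CompMor.id (X : C) : CompMor X X := ⟨𝟙_ C, (ρ_ X).hom⟩

lemma elemEquiv_comp_left {C1 C2 C3 : C} {φ φ' : CompMor C1 C2} (ψ : CompMor C2 C3)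
    (h : ElemEquiv φ φ') : ElemEquiv (φ.comp ψ) (φ'.comp ψ) := by
  obtain ⟨g, hg⟩ := h
  refine ⟨g ▷ ψ.D, ?_⟩
  simp only [CompMor.comp]
  rw [associator_inv_naturality_middle_assoc, ← comp_whiskerRight_assoc, hg]

lemma elemEquiv_comp_right {C1 C2 C3 : C} (φ : CompMor C1 C2) {ψ ψ' : CompMor C2 C3}
    (h : ElemEquiv ψ ψ') : ElemEquiv (φ.comp ψ) (φ.comp ψ') := by
  obtain ⟨g, hg⟩ := h
  refine ⟨φ.D ◁ g, ?_⟩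
  simp only [CompMor.comp]
  rw [associator_inv_naturality_right_assoc, whisker_exchange_assoc, hg]

lemma compEquiv_comp_left {C1 C2 C3 : C} {φ φ' : CompMor C1 C2} (ψ : CompMor C2 C3)
    (h : CompEquiv φ φ') : CompEquiv (φ.comp ψ) (φ'.comp ψ) := by
  induction h with
  | rel x y hxy => exact .rel _ _ (elemEquiv_comp_left ψ hxy)
  | refl x => exact .refl _
  | symm x y _ ih => exact .symm _ _ ih
  | trans x y z _ _ ih1 ih2 => exact .trans _ _ _ ih1 ih2

lemma compEquiv_comp_right {C1 C2 C3 : C} (φ : CompMor C1 C2) {ψ ψ' : CompMor C2 C3}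
    (h : CompEquiv ψ ψ') : CompEquiv (φ.comp ψ) (φ.comp ψ') := by
  induction h with
  | rel x y hxy => exact .rel _ _ (elemEquiv_comp_right φ hxy)
  | refl x => exact .refl _
  | symm x y _ ih => exact .symm _ _ ih
  | trans x y z _ _ ih1 ih2 => exact .trans _ _ _ ih1 ih2

/-- Composition of equivalence classes of complementary morphisms is
well-defined, associative, and unital up to equivalence; hence the objects of
`C` together with equivalence classes of complementary morphisms form a
category, the projection category `Pr(C)`. -/
theorem compMor_comp_category_laws :
    -- well-definedness in each factor
    (∀ (C1 C2 C3 : C) (φ φ' : CompMor C1 C2) (ψ ψ' : CompMor C2 C3),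
      CompEquiv φ φ' → CompEquiv ψ ψ' → CompEquiv (φ.comp ψ) (φ'.comp ψ')) ∧
    -- associativity up to equivalence
    (∀ (C1 C2 C3 C4 : C) (φ : CompMor C1 C2) (ψ : CompMor C2 C3)
        (χ : CompMor C3 C4),
      CompEquiv ((φ.comp ψ).comp χ) (φ.comp (ψ.comp χ))) ∧
    -- left and right unitality up to equivalence
    (∀ (C1 C2 : C) (φ : CompMor C1 C2),
      CompEquiv ((CompMor.id C1).comp φ) φ) ∧
    (∀ (C1 C2 : C) (φ : CompMor C1 C2),
      CompEquiv (φ.comp (CompMor.id C2)) φ) := by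
  refine ⟨?_, ?_, ?_, ?_⟩
  · intro C1 C2 C3 φ φ' ψ ψ' h1 h2
    exact .trans _ _ _ (compEquiv_comp_left ψ h1) (compEquiv_comp_right φ' h2)
  · intro C1 C2 C3 C4 φ ψ χ
    refine .rel _ _ ⟨(α_ φ.D ψ.D χ.D).hom, ?_⟩
    simp only [CompMor.comp]
    coherence
  · intro C1 C2 φ
    refine .rel _ _ ⟨(λ_ φ.D).hom, ?_⟩
    simp only [CompMor.comp, CompMor.id]
    coherence
  · intro C1 C2 φ
    refine .rel _ _ ⟨(ρ_ φ.D).hom, ?_⟩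
    simp only [CompMor.comp, CompMor.id]
    coherence
end

section
/- Let C be a skeletal symmetric monoidal groupoid. For objects C1, C2, there is a canonical bijection Hom_{Pr(C)}(C1, C2) ≅ ⨆_{D : C2 = C1 ⊗ D} Aut(C2)/Aut(D), where the coproduct runs over objects D with C1 ⊗ D = C2 and Aut(D) acts on Aut(C2) via g ↦ id_{C1} ⊗ g. -/
open CategoryTheory MonoidalCategory

universe v u

variable {C : Type u} [Category.{v} C] [MonoidalCategory C]

/-- The hom-set in the projection category `Pr(C)` from `C1` to `C2`:
equivalence classes of complementary morphisms. -/
def PrHom (C1 C2 : C) : Type max u v := Quot (@CompEquiv C _ _ C1 C2)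

/-- The orbit relation on `Aut C2` for the action of `Aut D` via
`g ↦ id_{C1} ⊗ g`, transported along the equality `C1 ⊗ D = C2`. -/
def autOrbitRel {C1 C2 : C} (D : C) (h : C1 ⊗ D = C2) (a b : Aut C2) : Prop :=
  ∃ g : Aut D, b.hom = eqToHom h.symm ≫ (C1 ◁ g.hom) ≫ eqToHom h ≫ a.hom

section Aux

variable {G : Type u} [Groupoid.{v} G] [MonoidalCategory G]

/-- Forward map on representatives. -/
def fwdAux (C1 C2 : G) (D : {D : G // C1 ⊗ D = C2}) (a : Aut C2) :
    PrHom C1 C2 :=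
  Quot.mk _ (⟨D.1, eqToHom D.2 ≫ a.hom⟩ : CompMor C1 C2)

lemma fwdAux_sound (C1 C2 : G) (D : {D : G // C1 ⊗ D = C2}) (a b : Aut C2)
    (hab : autOrbitRel D.1 D.2 a b) : fwdAux C1 C2 D a = fwdAux C1 C2 D b := by
  obtain ⟨g, hg⟩ := hab
  apply Quot.sound
  apply Relation.EqvGen.symm
  apply Relation.EqvGen.rel
  exact ⟨g.hom, by simp [hg]⟩

/-- Forward map. -/
def fwd (C1 C2 : G) (x : Σ D : {D : G // C1 ⊗ D = C2}, Quot (autOrbitRel D.1 D.2)) :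
    PrHom C1 C2 :=
  Quot.lift (fwdAux C1 C2 x.1) (fwdAux_sound C1 C2 x.1) x.2

/-- Backward map on representatives. -/
noncomputable def bwdAux (hskel : Skeletal G) (C1 C2 : G) (φ : CompMor C1 C2) :
    Σ D : {D : G // C1 ⊗ D = C2}, Quot (autOrbitRel D.1 D.2) :=
  ⟨⟨φ.D, hskel ⟨asIso φ.f⟩⟩,
    Quot.mk _ (asIso (eqToHom (hskel ⟨asIso φ.f⟩ : C1 ⊗ φ.D = C2).symm ≫ φ.f))⟩

lemma bwdAux_sound (hskel : Skeletal G) (C1 C2 : G) (φ φ' : CompMor C1 C2)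
    (hφ : ElemEquiv φ φ') : bwdAux hskel C1 C2 φ = bwdAux hskel C1 C2 φ' := by
  obtain ⟨D, f⟩ := φ
  obtain ⟨D', f'⟩ := φ'
  obtain ⟨g, hg⟩ := hφ
  dsimp at g hg
  obtain rfl : D = D' := hskel ⟨asIso g⟩
  unfold bwdAux
  dsimp
  congr 1
  apply Quot.sound
  refine ⟨(asIso g).symm, ?_⟩
  simp [← hg, ← MonoidalCategory.whiskerLeft_comp]

noncomputable def bwd (hskel : Skeletal G) (C1 C2 : G) (x : PrHom C1 C2) :
    Σ D : {D : G // C1 ⊗ D = C2}, Quot (autOrbitRel D.1 D.2) :=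
  Quot.lift (bwdAux hskel C1 C2)
    (fun φ φ' h => by
      induction h with
      | rel _ _ h => exact bwdAux_sound hskel C1 C2 _ _ h
      | refl => rfl
      | symm _ _ _ ih => exact ih.symm
      | trans _ _ _ _ _ ih1 ih2 => exact ih1.trans ih2) x

end Aux

/-- For a skeletal symmetric monoidal groupoid `C`, there is a canonical
bijection `Hom_{Pr(C)}(C1, C2) ≅ ⨆_{D : C1 ⊗ D = C2} Aut(C2)/Aut(D)`, sending
the class of `a ∈ Aut(C2)` in the summand indexed by `D` to the class of the
complementary morphism `C1 ⊗ D = C2 → C2` given by `a`. -/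
theorem prHom_equiv_sigma_aut_quotient {G : Type u} [Groupoid.{v} G]
    [MonoidalCategory G] [SymmetricCategory G] (hskel : Skeletal G)
    (C1 C2 : G) :
    ∃ e : (Σ D : {D : G // C1 ⊗ D = C2}, Quot (autOrbitRel D.1 D.2)) ≃
        PrHom C1 C2,
      ∀ (D : G) (h : C1 ⊗ D = C2) (a : Aut C2),
        e ⟨⟨D, h⟩, Quot.mk _ a⟩ =
          Quot.mk _ (⟨D, eqToHom h ≫ a.hom⟩ : CompMor C1 C2) := by
  refine ⟨⟨fwd C1 C2, bwd hskel C1 C2, ?_, ?_⟩, fun D h a => rfl⟩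
  · rintro ⟨⟨D, h⟩, a⟩
    induction a using Quot.ind with
    | _ a =>
      show bwdAux hskel C1 C2 ⟨D, eqToHom h ≫ a.hom⟩ = _
      unfold bwdAux
      dsimp
      congr 1
      congr 1
      ext
      simp
  · intro x
    induction x using Quot.ind with
    | _ φ =>
      show fwd C1 C2 (bwdAux hskel C1 C2 φ) = _
      unfold bwdAux fwd fwdAux
      dsimp
      congr 1
      obtain ⟨D, f⟩ := φ
      dsimp
      congr 1
      simp
end
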